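/- arXiv:1506.01138 — 7 statements merged into one kernel-verified Lean document; each statement's English description precedes it below -/
import Mathlib

section
/- Let $N, K, L$ be positive reals with $N > KL$, let $c > 0$, $c_1 > 0$, $c_2 > 0$, and $u > 0$ be reals. For each natural number $M \geq 1$ define $\gamma_M := c/\sqrt{M}$, $\sigma_{\omega}^2(M) := \frac{\frac{1}{\gamma_M}\left(\frac{KL}{N-KL} + \frac{1}{2K\gamma_M}\right)}{M (N-KL)(KL)^2}$, $x_M := \sigma_{\omega}^2(M)\, u^2$, and $\mathrm{SINR}(M) := \frac{e^{-x_M}}{(1 - e^{-x_M}) + \frac{1}{MK\gamma_M^2} + \frac{c_1}{M\gamma_M} + \frac{c_2}{M}}$. Then, with $\theta := \frac{1}{Kc^2}$ and $\alpha := \frac{u^2}{2(N-KL)(KL)^2}$, we have $\mathrm{SINR}(M) \to \frac{e^{-\alpha\theta}}{1 - e^{-\alpha\theta} + \theta}$ as $M \to \infty$. -/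
/-!
With `γ_M = c/√M` the noise term `1/(MKγ_M²) = 1/(Kc²) = θ` does not depend on `M`, the
CFO-estimation error is exactly `x_M = αθ + A/√M`, and the remaining interference terms are
`O(1/√M)`. Since `exp(-x)/(1 - exp(-x) + θ + r)` is continuous at `(αθ, 0)` (its denominator
there is at least `θ > 0`), the SINR converges to its value at that point.
-/

open Filter Real Topology

theorem tendsto_inv_sqrt_natCast_atTop_nhds_zero :
    Tendsto (fun M : ℕ => (√(M : ℝ))⁻¹) atTop (𝓝 0) := by
  simpa using (tendsto_inv_atTop_zero.comp tendsto_natCast_atTop_atTop).sqrt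

theorem tendsto_exp_neg_div_one_sub_exp_neg_add {ι : Type*} {l : Filter ι}
    {x r : ι → ℝ} {a θ : ℝ} (hx : Tendsto x l (𝓝 a)) (hr : Tendsto r l (𝓝 0))
    (ha : 0 ≤ a) (hθ : 0 < θ) :
    Tendsto (fun i => exp (-x i) / (1 - exp (-x i) + θ + r i)) l
      (𝓝 (exp (-a) / (1 - exp (-a) + θ))) := by
  have hden : 1 - exp (-a) + θ ≠ 0 := by
    have : exp (-a) ≤ 1 := exp_le_one_iff.mpr (neg_nonpos.mpr ha)
    linarith
  have hexp := hx.neg.rexp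
  have hsum : Tendsto (fun i => 1 - exp (-x i) + θ + r i) l (𝓝 (1 - exp (-a) + θ)) := by
    simpa using ((tendsto_const_nhds.sub hexp).add tendsto_const_nhds).add hr
  exact hexp.div hsum hden

theorem cfo_mse_mul_sq_eq {N K L c u m : ℝ} (hK : K ≠ 0) (hL : L ≠ 0) (hNKL : N - K * L ≠ 0)
    (hc : c ≠ 0) (hm : 0 < m) :
    ((1 / (c / √m)) * ((K * L) / (N - K * L) + 1 / (2 * K * (c / √m)))) /
        (m * (N - K * L) * (K * L) ^ 2) * u ^ 2
      = u ^ 2 / (2 * (N - K * L) * (K * L) ^ 2) * (1 / (K * c ^ 2))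
        + u ^ 2 / (c * (N - K * L) ^ 2 * (K * L)) * (√m)⁻¹ := by
  obtain ⟨s, hs, rfl⟩ : ∃ s, 0 < s ∧ m = s ^ 2 := ⟨√m, sqrt_pos.mpr hm, (sq_sqrt hm.le).symm⟩
  rw [sqrt_sq hs.le]
  field_simp
  ring

theorem add_noise_interference_eq {K c c₁ c₂ m : ℝ} (z : ℝ) (hK : K ≠ 0) (hc : c ≠ 0)
    (hm : 0 < m) :
    z + 1 / (m * K * (c / √m) ^ 2) + c₁ / (m * (c / √m)) + c₂ / m
      = z + 1 / (K * c ^ 2) + (c₁ / c * (√m)⁻¹ + c₂ * (√m)⁻¹ ^ 2) := by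
  obtain ⟨s, hs, rfl⟩ : ∃ s, 0 < s ∧ m = s ^ 2 := ⟨√m, sqrt_pos.mpr hm, (sq_sqrt hm.le).symm⟩
  rw [sqrt_sq hs.le]
  field_simp
  ring

theorem stmt3_general (N K L : ℝ) (hK : 0 < K) (hL : 0 < L)
    (hNKL : K * L < N) (c c₁ c₂ u : ℝ) (hc : 0 < c)
    (γ : ℕ → ℝ) (hγ : ∀ M : ℕ, 1 ≤ M → γ M = c / Real.sqrt M)
    (σω2 : ℕ → ℝ)
    (hσω2 : ∀ M : ℕ, 1 ≤ M →
      σω2 M = ((1 / γ M) * ((K * L) / (N - K * L) + 1 / (2 * K * γ M))) /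
        ((M : ℝ) * (N - K * L) * (K * L) ^ 2))
    (x : ℕ → ℝ) (hx : ∀ M : ℕ, 1 ≤ M → x M = σω2 M * u ^ 2)
    (SINR : ℕ → ℝ)
    (hSINR : ∀ M : ℕ, 1 ≤ M →
      SINR M = Real.exp (-(x M)) /
        ((1 - Real.exp (-(x M))) + 1 / ((M : ℝ) * K * (γ M) ^ 2)
          + c₁ / ((M : ℝ) * γ M) + c₂ / (M : ℝ)))
    (θ α : ℝ) (hθ : θ = 1 / (K * c ^ 2))
    (hα : α = u ^ 2 / (2 * (N - K * L) * (K * L) ^ 2)) :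
    Tendsto SINR atTop
      (nhds (Real.exp (-(α * θ)) / (1 - Real.exp (-(α * θ)) + θ))) := by
  have hNKL' : 0 < N - K * L := sub_pos.mpr hNKL
  have ht := tendsto_inv_sqrt_natCast_atTop_nhds_zero
  have hM : ∀ᶠ M : ℕ in atTop, 0 < (M : ℝ) ∧ 1 ≤ M :=
    (eventually_ge_atTop 1).mono fun M hM => ⟨by exact_mod_cast hM, hM⟩
  have hxlim : Tendsto x atTop (𝓝 (α * θ)) := by
    have hlin : Tendsto (fun M : ℕ => α * θ + u ^ 2 / (c * (N - K * L) ^ 2 * (K * L)) *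
        (√(M : ℝ))⁻¹) atTop (𝓝 (α * θ)) := by
      simpa using tendsto_const_nhds.add (tendsto_const_nhds.mul ht)
    refine hlin.congr' ?_
    filter_upwards [hM] with M ⟨hM0, hM1⟩
    rw [hx M hM1, hσω2 M hM1, hγ M hM1, cfo_mse_mul_sq_eq hK.ne' hL.ne' hNKL'.ne' hc.ne' hM0,
      hα, hθ]
  have hrlim : Tendsto (fun M : ℕ => c₁ / c * (√(M : ℝ))⁻¹ + c₂ * (√(M : ℝ))⁻¹ ^ 2) atTop
      (𝓝 0) := by
    simpa using (tendsto_const_nhds.mul ht).add (tendsto_const_nhds.mul (ht.pow 2))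
  have hαθ : 0 ≤ α * θ := by
    rw [hα, hθ]
    positivity
  refine (tendsto_exp_neg_div_one_sub_exp_neg_add hxlim hrlim hαθ
    (by rw [hθ]; positivity)).congr' ?_
  filter_upwards [hM] with M ⟨hM0, hM1⟩
  rw [hSINR M hM1, hγ M hM1, add_noise_interference_eq _ hK.ne' hc.ne' hM0, hθ]

/-- Limiting SINR underlying Remark 2 and the proof of Lemma 1: with received
SNR scaled as `γ_M = c/√M`, the per-user SINR of eq. (6) converges to the
positive constant `e^{-αθ}/(1 - e^{-αθ} + θ)` with `θ = 1/(Kc²)` and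
`α = u²/(2(N-KL)(KL)²)`, showing an `O(√M)` array gain is achievable. -/
theorem stmt3 (N K L : ℝ) (hN : 0 < N) (hK : 0 < K) (hL : 0 < L)
    (hNKL : K * L < N) (c c₁ c₂ u : ℝ) (hc : 0 < c) (hc₁ : 0 < c₁)
    (hc₂ : 0 < c₂) (hu : 0 < u)
    (γ : ℕ → ℝ) (hγ : ∀ M : ℕ, 1 ≤ M → γ M = c / Real.sqrt M)
    (σω2 : ℕ → ℝ)
    (hσω2 : ∀ M : ℕ, 1 ≤ M →
      σω2 M = ((1 / γ M) * ((K * L) / (N - K * L) + 1 / (2 * K * γ M))) /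
        ((M : ℝ) * (N - K * L) * (K * L) ^ 2))
    (x : ℕ → ℝ) (hx : ∀ M : ℕ, 1 ≤ M → x M = σω2 M * u ^ 2)
    (SINR : ℕ → ℝ)
    (hSINR : ∀ M : ℕ, 1 ≤ M →
      SINR M = Real.exp (-(x M)) /
        ((1 - Real.exp (-(x M))) + 1 / ((M : ℝ) * K * (γ M) ^ 2)
          + c₁ / ((M : ℝ) * γ M) + c₂ / (M : ℝ)))
    (θ α : ℝ) (hθ : θ = 1 / (K * c ^ 2))
    (hα : α = u ^ 2 / (2 * (N - K * L) * (K * L) ^ 2)) :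
    Tendsto SINR atTop
      (nhds (Real.exp (-(α * θ)) / (1 - Real.exp (-(α * θ)) + θ))) :=
  stmt3_general N K L hK hL hNKL c c₁ c₂ u hc γ hγ σω2 hσω2 x hx SINR hSINR θ α hθ hα
end

section
/- Let $R > 0$, $\alpha > 0$ be reals, let $\theta' > 0$ be the unique positive real satisfying $(1 + \theta')(1 - 2^{-R}) = e^{-\alpha\theta'}$, and set $\theta_0 := \frac{1}{2^R - 1}$. Then $\sqrt{\theta_0/\theta'} \leq \sqrt{1 + \alpha \cdot \frac{2^R}{2^R - 1}}$. -/
/-! With `s = 2^R`, the tangent-line bound `1 - x ≤ e^{-x}` turns the defining equation of `θ'`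
into the linear inequality `1 ≤ θ' (s - 1 + α s)`, which is the claim after dividing by
`(s - 1) θ'`. -/

open Real

lemma one_le_mul_of_mul_one_sub_inv_eq_exp {s α θ : ℝ} (hs : 0 < s)
    (h : (1 + θ) * (1 - s⁻¹) = exp (-(α * θ))) : 1 ≤ θ * (s - 1 + α * s) := by
  have htangent : 1 - α * θ ≤ (1 + θ) * (1 - s⁻¹) := by
    rw [h]
    linarith [add_one_le_exp (-(α * θ))]
  have hscaled : s * (1 - α * θ) ≤ (1 + θ) * (s - 1) :=
    calc s * (1 - α * θ) ≤ s * ((1 + θ) * (1 - s⁻¹)) := mul_le_mul_of_nonneg_left htangent hs.le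
      _ = (1 + θ) * (s - 1) := by field_simp
  linarith

lemma one_div_sub_one_mul_le_one_add_div {s α θ : ℝ} (hs : 1 < s) (hθ : 0 < θ)
    (h : 1 ≤ θ * (s - 1 + α * s)) : 1 / ((s - 1) * θ) ≤ 1 + α * s / (s - 1) := by
  have hs' : 0 < s - 1 := sub_pos.mpr hs
  rw [div_le_iff₀ (mul_pos hs' hθ)]
  calc 1 ≤ θ * (s - 1 + α * s) := h
    _ = (1 + α * s / (s - 1)) * ((s - 1) * θ) := by field_simp

theorem stmt8_general (R α θ' : ℝ) (hR : 0 < R) (hθ' : 0 < θ')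
    (heq : (1 + θ') * (1 - (2 : ℝ) ^ (-R)) = Real.exp (-(α * θ')))
    (θ₀ : ℝ) (hθ₀ : θ₀ = 1 / ((2 : ℝ) ^ R - 1)) :
    Real.sqrt (θ₀ / θ') ≤ Real.sqrt (1 + α * (2 : ℝ) ^ R / ((2 : ℝ) ^ R - 1)) := by
  have hs : 1 < (2 : ℝ) ^ R := one_lt_rpow (by norm_num) hR
  rw [rpow_neg zero_le_two] at heq
  have hkey := one_le_mul_of_mul_one_sub_inv_eq_exp (zero_lt_one.trans hs) heq
  apply sqrt_le_sqrt
  rw [hθ₀, div_div]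
  exact one_div_sub_one_mul_le_one_add_div hs hθ' hkey

/-- Exact version of the asymptotic SNR-gap formula (eq. (7)): the gap
`√(θ₀/θ')` between the residual-CFO and zero-CFO scenarios is at most
`√(1 + α·2^R/(2^R - 1))`. -/
theorem stmt8 (R α θ' : ℝ) (hR : 0 < R) (hα : 0 < α) (hθ' : 0 < θ')
    (heq : (1 + θ') * (1 - (2 : ℝ) ^ (-R)) = Real.exp (-(α * θ')))
    (θ₀ : ℝ) (hθ₀ : θ₀ = 1 / ((2 : ℝ) ^ R - 1)) :
    Real.sqrt (θ₀ / θ') ≤ Real.sqrt (1 + α * (2 : ℝ) ^ R / ((2 : ℝ) ^ R - 1)) :=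
  stmt8_general R α θ' hR hθ' heq θ₀ hθ₀
end

section
/- Let $\alpha > 0$ and $R \geq \log_2(1 + \alpha)$ be reals, and let $\theta' > 0$ be the unique positive real satisfying $(1 + \theta')(1 - 2^{-R}) = e^{-\alpha\theta'}$. Then $\alpha\,\theta' < 1$. -/
open Real

/-
Write `t = αθ'`. Since `2^R ≥ 1 + α`, the left-hand side of the fixed-point equation is at least
`(1 + θ') α / (1 + α) = (α + t) / (1 + α)`, while the right-hand side `e^{-t}` is below `1`
because `t > 0`. Hence `α + t < 1 + α`.
-/

lemma rpow_neg_le_inv_of_logb_le {b x R : ℝ} (hb : 1 < b) (hx : 0 < x) (h : logb b x ≤ R) :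
    b ^ (-R) ≤ x⁻¹ := by
  rw [rpow_neg (by positivity)]
  exact inv_anti₀ hx ((logb_le_iff_le_rpow hb hx).1 h)

/-- Key intermediate step of Lemma 1: with desired rate `R ≥ log₂(1+α)`, the
solution `θ'` of the rate fixed-point equation satisfies `αθ' < 1`, which
justifies the linearization `e^{-αθ'} ≈ 1 - αθ'`. -/
theorem stmt9 (α R θ' : ℝ) (hα : 0 < α) (hR : R ≥ Real.logb 2 (1 + α))
    (hθ' : 0 < θ')
    (heq : (1 + θ') * (1 - (2 : ℝ) ^ (-R)) = Real.exp (-(α * θ'))) :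
    α * θ' < 1 := by
  have h1α : 0 < 1 + α := by linarith
  have hpow : (2 : ℝ) ^ (-R) ≤ (1 + α)⁻¹ := rpow_neg_le_inv_of_logb_le one_lt_two h1α hR
  have hgap : α / (1 + α) ≤ 1 - (2 : ℝ) ^ (-R) := by
    calc α / (1 + α) = 1 - (1 + α)⁻¹ := by field_simp; ring
      _ ≤ 1 - (2 : ℝ) ^ (-R) := by linarith
  have hexp : exp (-(α * θ')) < 1 := exp_lt_one_iff.2 (neg_neg_of_pos (mul_pos hα hθ'))
  have hlt : (1 + θ') * (α / (1 + α)) < 1 :=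
    calc (1 + θ') * (α / (1 + α)) ≤ (1 + θ') * (1 - (2 : ℝ) ^ (-R)) :=
          mul_le_mul_of_nonneg_left hgap (by linarith)
      _ = exp (-(α * θ')) := heq
      _ < 1 := hexp
  rw [mul_div_assoc', div_lt_one h1α] at hlt
  linarith
end

section
/- Fix a real $R > 0$. For $\alpha > 0$ let $\theta'(\alpha)$ denote the unique positive real satisfying $(1 + \theta'(\alpha))(1 - 2^{-R}) = e^{-\alpha\,\theta'(\alpha)}$. Then $\theta'$ is strictly antitone: for all reals $0 < \alpha_1 < \alpha_2$, one has $\theta'(\alpha_2) < \theta'(\alpha_1)$. -/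
open Real Set

/-- The left side `(1 + θ) c` increases and the right side `exp (-(α θ))` decreases in `θ`, and
the right side also decreases in `α`, so the crossing point moves left as `α` grows. -/
theorem strictAntiOn_of_one_add_mul_eq_exp_neg_mul {c : ℝ} (hc : 0 < c) {θ : ℝ → ℝ}
    (hθ : ∀ α : ℝ, 0 < α → 0 < θ α ∧ (1 + θ α) * c = exp (-(α * θ α))) :
    StrictAntiOn θ (Ioi 0) := by
  intro a ha b hb hab
  by_contra! hle
  obtain ⟨hθa, ha_eq⟩ := hθ a ha
  obtain ⟨-, hb_eq⟩ := hθ b hb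
  have hexp : exp (-(a * θ a)) ≤ exp (-(b * θ b)) := by
    rw [← ha_eq, ← hb_eq]
    gcongr
  have hprod_le : b * θ b ≤ a * θ a := by simpa using hexp
  have hprod_lt : a * θ a < b * θ b :=
    calc a * θ a < b * θ a := by gcongr
      _ ≤ b * θ b := by gcongr; exact (lt_trans ha hab).le
  linarith

/-- For fixed rate `R > 0`, the solution `θ'(α)` of the rate fixed-point
equation is strictly antitone in the CFO parameter `α > 0`: the asymptotic SNR
gap `√(θ₀/θ'(α))` to the zero-CFO scenario strictly increases with `α`. -/
theorem stmt11 (R : ℝ) (hR : 0 < R) (θ' : ℝ → ℝ)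
    (hθ' : ∀ α : ℝ, 0 < α → 0 < θ' α ∧
      (1 + θ' α) * (1 - (2 : ℝ) ^ (-R)) = Real.exp (-(α * θ' α))) :
    StrictAntiOn θ' (Set.Ioi (0 : ℝ)) := by
  have hc : 0 < 1 - (2 : ℝ) ^ (-R) :=
    sub_pos.mpr (rpow_lt_one_of_one_lt_of_neg one_lt_two (neg_neg_of_pos hR))
  exact strictAntiOn_of_one_add_mul_eq_exp_neg_mul hc hθ'
end

section
/- Let $N, K, k, t, R$ be positive reals with $K \geq 1$, $k \geq 1$, $R > 0$, and let $L_1, L_2$ be reals with $1 \leq L_1 < L_2 \leq \frac{N}{2K}$ and $t > (k-1)L_2$. For $i \in \{1,2\}$ define $\alpha_i := \frac{(t-(k-1)L_i)^2}{2(N-KL_i)(KL_i)^2}$ and let $\theta'_i > 0$ be the unique positive real satisfying $(1+\theta'_i)(1 - 2^{-R}) = e^{-\alpha_i \theta'_i}$, and set $\theta_0 := \frac{1}{2^R - 1}$. Then $\sqrt{\theta_0/\theta'_2} < \sqrt{\theta_0/\theta'_1}$. -/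
/-!
The exponent `α(L)` strictly decreases in `L`: its numerator `(t - (k-1)L)²` does not grow, while
its denominator `2(N - KL)(KL)²` is `2x²(N - x)` at `x = KL`, which increases for `x ≤ 2N/3`.
The root `θ'` of `(1 + θ)(1 - 2^{-R}) = e^{-αθ}` is where an increasing line meets a decreasing
exponential, and lowering `α` lifts the exponential, so `θ'` moves right. Hence `θ₀/θ'` decreases.
-/

open Real

theorem strictMonoOn_sub_mul_sq (N : ℝ) :
    StrictMonoOn (fun x : ℝ => (N - x) * x ^ 2) (Set.Icc 0 (2 * N / 3)) := by
  rintro a ⟨ha, -⟩ b ⟨-, hb⟩ hab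
  have hkey : a ^ 2 + a * b + b ^ 2 < N * (a + b) := by
    nlinarith [mul_le_mul_of_nonneg_right hb (by linarith : 0 ≤ a + b),
      mul_pos (sub_pos.mpr hab) (by linarith : 0 < a + b / 2)]
  have hdiff : (N - b) * b ^ 2 - (N - a) * a ^ 2
      = (b - a) * (N * (a + b) - (a ^ 2 + a * b + b ^ 2)) := by
    ring
  nlinarith [mul_pos (sub_pos.mpr hab) (sub_pos.mpr hkey)]

/-- The exponent `α_{k,t}` of the paper, as a function of the frequency selectivity `L`. -/
noncomputable def cfoExponent (N K k t L : ℝ) : ℝ :=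
  (t - (k - 1) * L) ^ 2 / (2 * (N - K * L) * (K * L) ^ 2)

section cfoExponent

variable {N K k t L L₁ L₂ : ℝ}

theorem cfoExponent_nonneg (hK : 0 < K) (hL : 0 < L) (hN : K * L < N) :
    0 ≤ cfoExponent N K k t L := by
  unfold cfoExponent
  have : 0 < N - K * L := by linarith
  positivity

theorem cfoExponent_lt_cfoExponent (hK : 0 < K) (hk : 1 ≤ k) (hL₁ : 0 < L₁) (hL : L₁ < L₂)
    (hL₂ : K * L₂ ≤ 2 * N / 3) (htL : (k - 1) * L₂ < t) :
    cfoExponent N K k t L₂ < cfoExponent N K k t L₁ := by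
  have hKL : K * L₁ < K * L₂ := mul_lt_mul_of_pos_left hL hK
  have hKL₁ : 0 < K * L₁ := mul_pos hK hL₁
  have hshift : (k - 1) * L₁ ≤ (k - 1) * L₂ := mul_le_mul_of_nonneg_left hL.le (by linarith)
  have hnum : (t - (k - 1) * L₂) ^ 2 ≤ (t - (k - 1) * L₁) ^ 2 :=
    pow_le_pow_left₀ (by linarith) (by linarith) 2
  have hden : (N - K * L₁) * (K * L₁) ^ 2 < (N - K * L₂) * (K * L₂) ^ 2 :=
    strictMonoOn_sub_mul_sq N ⟨hKL₁.le, by linarith⟩ ⟨(hKL₁.trans hKL).le, hL₂⟩ hKL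
  have hden₁ : 0 < 2 * (N - K * L₁) * (K * L₁) ^ 2 := by
    have : 0 < N - K * L₁ := by linarith
    positivity
  unfold cfoExponent
  calc (t - (k - 1) * L₂) ^ 2 / (2 * (N - K * L₂) * (K * L₂) ^ 2)
      ≤ (t - (k - 1) * L₁) ^ 2 / (2 * (N - K * L₂) * (K * L₂) ^ 2) := by
        gcongr
        linarith
    _ < (t - (k - 1) * L₁) ^ 2 / (2 * (N - K * L₁) * (K * L₁) ^ 2) := by
        refine div_lt_div_of_pos_left (pow_pos (by linarith) 2) hden₁ ?_
        linarith

end cfoExponent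

theorem lt_of_one_add_mul_eq_exp_neg_mul {c α₁ α₂ θ₁ θ₂ : ℝ} (hc : 0 < c) (hα₂ : 0 ≤ α₂)
    (hα : α₂ < α₁) (hθ₁ : 0 < θ₁) (h₁ : (1 + θ₁) * c = exp (-(α₁ * θ₁)))
    (h₂ : (1 + θ₂) * c = exp (-(α₂ * θ₂))) : θ₁ < θ₂ := by
  by_contra! hθ
  have hexp : α₂ * θ₂ < α₁ * θ₁ :=
    (mul_le_mul_of_nonneg_left hθ hα₂).trans_lt (mul_lt_mul_of_pos_right hα hθ₁)
  have : (1 + θ₁) * c < (1 + θ₂) * c := by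
    rw [h₁, h₂]
    exact exp_lt_exp.mpr (by linarith)
  linarith [(mul_lt_mul_iff_of_pos_right hc).mp this]

theorem stmt13_general (N K k t R : ℝ) (hK : 1 ≤ K) (hk : 1 ≤ k)
    (hR : 0 < R) (L₁ L₂ : ℝ) (hL₁ : 1 ≤ L₁) (hL₁₂ : L₁ < L₂)
    (hL₂ : L₂ ≤ N / (2 * K)) (htL : t > (k - 1) * L₂)
    (α₁ α₂ : ℝ)
    (hα₁ : α₁ = (t - (k - 1) * L₁) ^ 2 / (2 * (N - K * L₁) * (K * L₁) ^ 2))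
    (hα₂ : α₂ = (t - (k - 1) * L₂) ^ 2 / (2 * (N - K * L₂) * (K * L₂) ^ 2))
    (θ'₁ θ'₂ : ℝ) (hθ'₁ : 0 < θ'₁)
    (heq₁ : (1 + θ'₁) * (1 - (2 : ℝ) ^ (-R)) = Real.exp (-(α₁ * θ'₁)))
    (heq₂ : (1 + θ'₂) * (1 - (2 : ℝ) ^ (-R)) = Real.exp (-(α₂ * θ'₂)))
    (θ₀ : ℝ) (hθ₀ : θ₀ = 1 / ((2 : ℝ) ^ R - 1)) :
    Real.sqrt (θ₀ / θ'₂) < Real.sqrt (θ₀ / θ'₁) := by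
  have hK₀ : 0 < K := by linarith
  have hKL₁ : 0 < K * L₁ := mul_pos hK₀ (by linarith)
  have hKL₁₂ : K * L₁ < K * L₂ := mul_lt_mul_of_pos_left hL₁₂ hK₀
  have hKL₂ : K * L₂ ≤ N / 2 := by
    rw [le_div_iff₀ (by positivity)] at hL₂
    linarith
  have hα : α₂ < α₁ := hα₁ ▸ hα₂ ▸
    cfoExponent_lt_cfoExponent hK₀ hk (by linarith) hL₁₂ (by linarith) htL
  have hα₂₀ : 0 ≤ α₂ := hα₂ ▸
    cfoExponent_nonneg hK₀ (by linarith) (by linarith)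
  have hc : 0 < 1 - (2 : ℝ) ^ (-R) :=
    sub_pos.mpr (rpow_lt_one_of_one_lt_of_neg one_lt_two (neg_neg_of_pos hR))
  have hθ : θ'₁ < θ'₂ := lt_of_one_add_mul_eq_exp_neg_mul hc hα₂₀ hα hθ'₁ heq₁ heq₂
  have hθ₀pos : 0 < θ₀ := hθ₀ ▸ one_div_pos.mpr (sub_pos.mpr (one_lt_rpow one_lt_two hR))
  exact sqrt_lt_sqrt (div_nonneg hθ₀pos.le (hθ'₁.trans hθ).le)
    (div_lt_div_of_pos_left hθ₀pos hθ'₁ hθ)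

/-- Lemma 1: for a fixed per-user rate `R`, the asymptotic gap
`lim γ_k/γ_{k,0} = √(θ₀/θ')` in required received SNR between the residual-CFO
scenario and the zero-CFO scenario strictly decreases with increasing
frequency selectivity `L ≤ N/(2K)`. -/
theorem stmt13 (N K k t R : ℝ) (hN : 0 < N) (hK : 1 ≤ K) (hk : 1 ≤ k)
    (ht : 0 < t) (hR : 0 < R) (L₁ L₂ : ℝ) (hL₁ : 1 ≤ L₁) (hL₁₂ : L₁ < L₂)
    (hL₂ : L₂ ≤ N / (2 * K)) (htL : t > (k - 1) * L₂)
    (α₁ α₂ : ℝ)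
    (hα₁ : α₁ = (t - (k - 1) * L₁) ^ 2 / (2 * (N - K * L₁) * (K * L₁) ^ 2))
    (hα₂ : α₂ = (t - (k - 1) * L₂) ^ 2 / (2 * (N - K * L₂) * (K * L₂) ^ 2))
    (θ'₁ θ'₂ : ℝ) (hθ'₁ : 0 < θ'₁) (hθ'₂ : 0 < θ'₂)
    (heq₁ : (1 + θ'₁) * (1 - (2 : ℝ) ^ (-R)) = Real.exp (-(α₁ * θ'₁)))
    (heq₂ : (1 + θ'₂) * (1 - (2 : ℝ) ^ (-R)) = Real.exp (-(α₂ * θ'₂)))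
    (θ₀ : ℝ) (hθ₀ : θ₀ = 1 / ((2 : ℝ) ^ R - 1)) :
    Real.sqrt (θ₀ / θ'₂) < Real.sqrt (θ₀ / θ'₁) :=
  stmt13_general N K k t R hK hk hR L₁ L₂ hL₁ hL₁₂ hL₂ htL α₁ α₂ hα₁ hα₂ θ'₁ θ'₂ hθ'₁ heq₁ heq₂ θ₀
    hθ₀
end

section
/- Let $M, \gamma, N, K$ be positive reals with $K \geq 1$, and let $L_1, L_2$ be reals with $1 \leq L_1 < L_2 \leq \frac{N}{3K}$. Define $g(L) := \frac{1}{M\gamma (N-KL)^2 K L} + \frac{1}{2 K M \gamma^2 (N-KL)(KL)^2}$. Then $g(L_2) < g(L_1)$. -/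
/-! With `x = K L`, both denominators of `g` are positive multiples of the cubics
`x (N - x)²` and `x² (N - x)`, which are strictly increasing on `[0, N/3]` and `[0, 2N/3]`
respectively; hence both terms of `g` strictly decrease. -/

open Set

lemma strictMonoOn_mul_sub_sq (N : ℝ) :
    StrictMonoOn (fun x : ℝ => x * (N - x) ^ 2) (Icc 0 (N / 3)) := by
  rintro a ⟨ha, -⟩ b ⟨-, hb⟩ hab
  -- `b (N - b)² - a (N - a)² = (b - a) ((N - a - b)² - a b)` and `N - a - b ≥ b`
  have key : a * b < (N - a - b) ^ 2 := by nlinarith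
  nlinarith [mul_pos (sub_pos.mpr hab) (sub_pos.mpr key)]

lemma strictMonoOn_sq_mul_sub (N : ℝ) :
    StrictMonoOn (fun x : ℝ => x ^ 2 * (N - x)) (Icc 0 (2 * N / 3)) := by
  rintro a ⟨ha, -⟩ b ⟨-, hb⟩ hab
  -- `b² (N - b) - a² (N - a) = (b - a) (N (a + b) - (a² + a b + b²))`
  have key : a ^ 2 + a * b + b ^ 2 < N * (a + b) := by nlinarith
  nlinarith [mul_pos (sub_pos.mpr hab) (sub_pos.mpr key)]

theorem stmt15_general (M γ N K : ℝ) (hM : 0 < M) (hγ : 0 < γ)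
    (hK : 1 ≤ K) (L₁ L₂ : ℝ) (hL₁ : 1 ≤ L₁) (hL₁₂ : L₁ < L₂)
    (hL₂ : L₂ ≤ N / (3 * K))
    (g : ℝ → ℝ)
    (hg : ∀ L : ℝ, g L = 1 / (M * γ * (N - K * L) ^ 2 * K * L)
      + 1 / (2 * K * M * γ ^ 2 * (N - K * L) * (K * L) ^ 2)) :
    g L₂ < g L₁ := by
  have hg' : ∀ L, g L = 1 / (M * γ * (K * L * (N - K * L) ^ 2))
      + 1 / (2 * K * M * γ ^ 2 * ((K * L) ^ 2 * (N - K * L))) := by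
    intro L; rw [hg]; ring
  have hK₀ : 0 < K := by linarith
  have ha : 0 < K * L₁ := by nlinarith
  have hab : K * L₁ < K * L₂ := mul_lt_mul_of_pos_left hL₁₂ hK₀
  have hb : K * L₂ ≤ N / 3 := by
    rw [le_div_iff₀ (by positivity)] at hL₂; linarith
  have hNa : 0 < N - K * L₁ := by linarith
  have hf := strictMonoOn_mul_sub_sq N ⟨ha.le, by linarith⟩ ⟨by linarith, hb⟩ hab
  have hh := strictMonoOn_sq_mul_sub N ⟨ha.le, by linarith⟩ ⟨by linarith, by linarith⟩ hab
  simp only at hf hh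
  rw [hg', hg']
  gcongr

/-- For fixed received SNR `γ`, the MSE of CFO estimation
`g(L) = 1/(Mγ(N-KL)²KL) + 1/(2KMγ²(N-KL)(KL)²)` strictly decreases with
increasing frequency selectivity `L ≤ N/(3K)`. -/
theorem stmt15 (M γ N K : ℝ) (hM : 0 < M) (hγ : 0 < γ) (hN : 0 < N)
    (hK : 1 ≤ K) (L₁ L₂ : ℝ) (hL₁ : 1 ≤ L₁) (hL₁₂ : L₁ < L₂)
    (hL₂ : L₂ ≤ N / (3 * K))
    (g : ℝ → ℝ)
    (hg : ∀ L : ℝ, g L = 1 / (M * γ * (N - K * L) ^ 2 * K * L)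
      + 1 / (2 * K * M * γ ^ 2 * (N - K * L) * (K * L) ^ 2)) :
    g L₂ < g L₁ :=
  stmt15_general M γ N K hM hγ hK L₁ L₂ hL₁ hL₁₂ hL₂ g hg
end

section
/- Let $(\Omega, \mathcal{F}, \mu)$ be a probability space, $v \geq 0$ and $u$ reals, $\Delta : \Omega \to \mathbb{R}$ a random variable whose law is the real Gaussian measure with mean $0$ and variance $v$, and $S : \Omega \to \mathbb{R}$ a random variable independent of $\Delta$ with $S^2$ integrable. Then $\int_\Omega \left| S(\omega) e^{i u \Delta(\omega)} \right|^2 d\mu(\omega) \; - \; \left\| \int_\Omega S(\omega) e^{i u \Delta(\omega)} d\mu(\omega) \right\|^2 \; = \; \mathrm{Var}(S) + \left(\int_\Omega S \, d\mu\right)^2 \left(1 - e^{-v u^2}\right). -/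
/-!
Since `|e^{iuΔ}| = 1`, the second moment is `E[S²]`. By independence the mean factors as
`E[S] · E[e^{iuΔ}]`, and `E[e^{iuΔ}] = e^{-vu²/2}` is the Gaussian characteristic function;
subtracting `E[S]² e^{-vu²}` from `E[S²] = Var S + E[S]²` gives the claim.
-/

open MeasureTheory ProbabilityTheory Complex

theorem ProbabilityTheory.IndepFun.integral_ofReal_mul_cexp_eq_mul_charFun {Ω : Type*}
    [MeasurableSpace Ω] {μ : Measure Ω} {X Y : Ω → ℝ} (hXY : IndepFun X Y μ) (hX : AEMeasurable X μ)
    (hY : AEMeasurable Y μ) (u : ℝ) :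
    ∫ ω, (X ω : ℂ) * cexp (I * u * Y ω) ∂μ = (∫ ω, X ω ∂μ) * charFun (μ.map Y) u := by
  rw [hXY.integral_fun_comp_mul_comp (f := ((↑) : ℝ → ℂ)) (g := fun y : ℝ => cexp (I * u * y))
    hX hY (by fun_prop) (by fun_prop), integral_complex_ofReal, charFun_apply_real,
    integral_map hY (by fun_prop)]
  simp only [mul_comm I, mul_right_comm _ I]

theorem charFun_gaussianReal_zero (v : NNReal) (u : ℝ) :
    charFun (gaussianReal 0 v) u = Real.exp (-(v * u ^ 2 / 2)) := by
  rw [charFun_gaussianReal]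
  push_cast
  ring_nf

theorem norm_ofReal_mul_cexp_I_mul_sq (s t : ℝ) : ‖(s : ℂ) * cexp (I * t)‖ ^ 2 = s ^ 2 := by
  rw [norm_mul, mul_comm I, norm_exp_ofReal_mul_I, norm_real, mul_one, Real.norm_eq_abs, sq_abs]

theorem stmt17_general {Ω : Type*} [MeasurableSpace Ω] (μ : Measure Ω)
    [IsProbabilityMeasure μ] (v u : ℝ) (hv : 0 ≤ v)
    (Δ S : Ω → ℝ) (hSm : Measurable S)
    (hlaw : μ.map Δ = gaussianReal 0 ⟨v, hv⟩)
    (hS2 : Integrable (fun ω => S ω ^ 2) μ) (hindep : IndepFun S Δ μ) :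
    (∫ ω, ‖(S ω : ℂ) * Complex.exp (Complex.I * (u : ℂ) * (Δ ω : ℂ))‖ ^ 2 ∂μ)
      - ‖∫ ω, (S ω : ℂ) * Complex.exp (Complex.I * (u : ℂ) * (Δ ω : ℂ)) ∂μ‖ ^ 2
    = variance S μ + (∫ ω, S ω ∂μ) ^ 2 * (1 - Real.exp (-(v * u ^ 2))) := by
  -- `⟨v, hv⟩` elaborates at the subtype `{r // 0 ≤ r}`, not at `ℝ≥0`, so lemmas about
  -- `gaussianReal 0 v` apply only up to unfolding (`exact`, explicit instances), not by `rw`.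
  have hΔ : AEMeasurable Δ μ := aemeasurable_of_map_neZero <| by
    rw [hlaw]; exact ⟨(instIsProbabilityMeasureGaussianReal 0 _).ne_zero⟩
  have hchar : charFun (μ.map Δ) u = Real.exp (-(v * u ^ 2 / 2)) := by
    rw [hlaw]; exact charFun_gaussianReal_zero ⟨v, hv⟩ u
  have hmean : ∫ ω, (S ω : ℂ) * cexp (I * u * Δ ω) ∂μ
      = ((∫ ω, S ω ∂μ) * Real.exp (-(v * u ^ 2 / 2)) : ℝ) := by
    rw [hindep.integral_ofReal_mul_cexp_eq_mul_charFun hSm.aemeasurable hΔ, hchar, ofReal_mul]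
  have hsecond : ∫ ω, ‖(S ω : ℂ) * cexp (I * u * Δ ω)‖ ^ 2 ∂μ = ∫ ω, S ω ^ 2 ∂μ := by
    simp only [mul_assoc I, ← ofReal_mul, norm_ofReal_mul_cexp_I_mul_sq]
  have hexp : Real.exp (-(v * u ^ 2 / 2)) ^ 2 = Real.exp (-(v * u ^ 2)) := by
    rw [← Real.exp_nat_mul]; ring_nf
  rw [hmean, hsecond, norm_real, Real.norm_eq_abs, sq_abs,
    variance_eq_sub ((memLp_two_iff_integrable_sq hSm.aestronglyMeasurable).2 hS2)]
  simp only [Pi.pow_apply]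
  rw [mul_pow, hexp]
  ring

/-- Variance of the self-interference term in Table I: for `S` (with `S²`
integrable) independent of the Gaussian residual CFO error `Δ ~ N(0, v)`,
`E[|S e^{iuΔ}|²] - |E[S e^{iuΔ}]|² = Var(S) + (E[S])² (1 - e^{-v u²})`. -/
theorem stmt17 {Ω : Type*} [MeasurableSpace Ω] (μ : Measure Ω)
    [IsProbabilityMeasure μ] (v u : ℝ) (hv : 0 ≤ v)
    (Δ S : Ω → ℝ) (hΔ : Measurable Δ) (hSm : Measurable S)
    (hlaw : μ.map Δ = gaussianReal 0 ⟨v, hv⟩)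
    (hS2 : Integrable (fun ω => S ω ^ 2) μ) (hindep : IndepFun S Δ μ) :
    (∫ ω, ‖(S ω : ℂ) * Complex.exp (Complex.I * (u : ℂ) * (Δ ω : ℂ))‖ ^ 2 ∂μ)
      - ‖∫ ω, (S ω : ℂ) * Complex.exp (Complex.I * (u : ℂ) * (Δ ω : ℂ)) ∂μ‖ ^ 2
    = variance S μ + (∫ ω, S ω ∂μ) ^ 2 * (1 - Real.exp (-(v * u ^ 2))) :=
  stmt17_general μ v u hv Δ S hSm hlaw hS2 hindep
end
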